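/- (Clifford's theorem, module version) Let k be a field, G a group, N a normal subgroup of G, and V a finite-dimensional k[G]-module. If V is semisimple as a k[G]-module, then V is semisimple as a k[N]-module. -/

import Mathlib

/-!
Since `N` is normal, each `ρ g` permutes the `N`-subrepresentations and hence fixes the socle of
`ρ|N`, the sum of its simple `N`-subrepresentations. The socle is therefore a `G`-subrepresentation
and has a `G`-stable complement. That complement is `N`-stable and meets the socle trivially, so it
contains no simple `N`-subrepresentation; as `V` is Artinian it is zero, and `ρ|N` is the sum of
its simple subrepresentations.
-/

open scoped MonoidAlgebra

theorem OrderIso.map_sSup_setOf_isAtom {α : Type*} [CompleteLattice α] (φ : α ≃o α) :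
    φ (sSup {a | IsAtom a}) = sSup {a | IsAtom a} := by
  rw [φ.map_sSup, ← sSup_image]
  congr 1
  ext a
  exact ⟨by rintro ⟨b, hb, rfl⟩; exact (φ.isAtom_iff b).mpr hb,
    fun ha => ⟨φ.symm a, (φ.symm.isAtom_iff a).mpr ha, φ.apply_symm_apply a⟩⟩

namespace Subrepresentation

section Socle

variable {k H V : Type*} [CommRing k] [Monoid H] [AddCommGroup V] [Module k V]
  {ρ : Representation k H V}

instance [IsArtinian k V] : WellFoundedLT (Subrepresentation ρ) :=
  StrictMono.wellFoundedLT (f := toSubmodule) fun _ _ h => h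

/- `Subrepresentation ρ` carries no complete lattice structure, so the supremum is taken among the
submodules of `ρ.asModule`. -/
variable (ρ) in
noncomputable def socle : Subrepresentation ρ :=
  ofSubmodule' (sSup {m : Submodule k[H] ρ.asModule | IsSimpleModule k[H] m})

theorem socle_eq :
    socle ρ = subrepresentationSubmoduleOrderIso.symm
      (sSup {m : Submodule k[H] ρ.asModule | IsAtom m}) := by
  simp only [← isSimpleModule_iff_isAtom]
  rfl

theorem map_socle (φ : Subrepresentation ρ ≃o Subrepresentation ρ) : φ (socle ρ) = socle ρ := by
  let e := subrepresentationSubmoduleOrderIso (ρ := ρ)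
  rw [socle_eq]
  calc φ (e.symm (sSup {m | IsAtom m}))
      = e.symm ((e.symm.trans (φ.trans e)) (sSup {m | IsAtom m})) := by
        rw [OrderIso.trans_apply, OrderIso.trans_apply, OrderIso.symm_apply_apply]
    _ = e.symm (sSup {m | IsAtom m}) := by rw [OrderIso.map_sSup_setOf_isAtom]

theorem le_socle_of_isAtom {σ : Subrepresentation ρ} (hσ : IsAtom σ) : σ ≤ socle ρ := by
  rw [socle_eq, OrderIso.le_symm_apply]
  exact le_sSup ((subrepresentationSubmoduleOrderIso.isAtom_iff σ).mpr hσ)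

theorem eq_bot_of_socle_inf_eq_bot [IsAtomic (Subrepresentation ρ)] {σ : Subrepresentation ρ}
    (h : socle ρ ⊓ σ = ⊥) : σ = ⊥ := by
  obtain hσ | ⟨a, ha, haσ⟩ := eq_bot_or_exists_atom_le σ
  · exact hσ
  · exact absurd (le_bot_iff.mp (h ▸ le_inf (le_socle_of_isAtom ha) haσ)) ha.ne_bot

theorem complementedLattice_of_socle_eq_top (h : socle ρ = ⊤) :
    ComplementedLattice (Subrepresentation ρ) := by
  rw [subrepresentationSubmoduleOrderIso.complementedLattice_iff, ← isSemisimpleModule_iff]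
  refine IsSemisimpleModule.of_sSup_simples_eq_top ?_
  rw [← map_top subrepresentationSubmoduleOrderIso, ← h]
  rfl

end Socle

section Restriction

variable {k G H V : Type*} [CommRing k] [Group G] [Monoid H] [AddCommGroup V] [Module k V]
  {ρ : Representation k G V}

def comp (σ : Subrepresentation ρ) (f : H →* G) : Subrepresentation (ρ.comp f) :=
  ⟨σ.toSubmodule, fun h _ hv => σ.apply_mem_toSubmodule (f h) hv⟩

variable (N : Subgroup G) [N.Normal]

def conj (g : G) (σ : Subrepresentation (ρ.comp N.subtype)) :
    Subrepresentation (ρ.comp N.subtype) where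
  toSubmodule := σ.toSubmodule.comap (ρ g)
  apply_mem_toSubmodule n v hv := by
    have hconj : ρ g (ρ n v) = ρ (g * n * g⁻¹) (ρ g v) := by
      simp only [← Module.End.mul_apply, ← map_mul, inv_mul_cancel_right]
    change ρ g (ρ n v) ∈ σ
    rw [hconj]
    exact σ.apply_mem_toSubmodule ⟨g * n * g⁻¹, ‹N.Normal›.conj_mem n n.2 g⟩ hv

@[simp]
theorem mem_conj {g : G} {σ : Subrepresentation (ρ.comp N.subtype)} {v : V} :
    v ∈ conj N g σ ↔ ρ g v ∈ σ :=
  Iff.rfl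

def conjOrderIso (g : G) :
    Subrepresentation (ρ.comp N.subtype) ≃o Subrepresentation (ρ.comp N.subtype) where
  toFun := conj N g
  invFun := conj N g⁻¹
  left_inv σ := SetLike.ext fun v => by simp
  right_inv σ := SetLike.ext fun v => by simp
  map_rel_iff' {σ τ} := ⟨fun h v hv => by simpa using h (show ρ g⁻¹ v ∈ conj N g σ by simpa),
    fun h _ hv => h hv⟩

theorem apply_mem_socle_comp_subtype (g : G) {v : V} (hv : v ∈ socle (ρ.comp N.subtype)) :
    ρ g v ∈ socle (ρ.comp N.subtype) := by
  rw [← map_socle (conjOrderIso N g⁻¹)]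
  simpa [conjOrderIso] using hv

theorem complementedLattice_comp_subtype [IsArtinian k V]
    [ComplementedLattice (Subrepresentation ρ)] :
    ComplementedLattice (Subrepresentation (ρ.comp N.subtype)) := by
  let σ : Subrepresentation ρ :=
    ⟨(socle (ρ.comp N.subtype)).toSubmodule, fun g _ => apply_mem_socle_comp_subtype N g⟩
  obtain ⟨τ, hστ⟩ := exists_isCompl σ
  have hτN : τ.comp N.subtype = ⊥ :=
    eq_bot_of_socle_inf_eq_bot (toSubmodule_injective (congrArg toSubmodule hστ.inf_eq_bot :))
  have hτ : τ = ⊥ := toSubmodule_injective (congrArg toSubmodule hτN :)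
  have hσ : σ = ⊤ := eq_top_of_isCompl_bot (hτ ▸ hστ)
  exact complementedLattice_of_socle_eq_top (toSubmodule_injective (congrArg toSubmodule hσ :))

end Restriction

end Subrepresentation

/-- Clifford's theorem, module version: if `N` is a normal subgroup of `G`
and `V` is a finite-dimensional `k[G]`-module which is semisimple, then `V` is semisimple
as a `k[N]`-module, via restriction along the inclusion. -/
theorem stmt4 {k G V : Type*} [Field k] [Group G] [AddCommGroup V] [Module k V]
    [FiniteDimensional k V] (N : Subgroup G) [N.Normal]
    (ρ : Representation k G V)
    (h : IsSemisimpleModule (MonoidAlgebra k G) ρ.asModule) :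
    IsSemisimpleModule (MonoidAlgebra k ↥N)
      (Representation.asModule (ρ.comp N.subtype : Representation k ↥N V)) := by
  rw [← Representation.isSemisimpleRepresentation_iff_isSemisimpleModule_asModule] at h ⊢
  exact Subrepresentation.complementedLattice_comp_subtype N
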